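/- arXiv:2605.15244 — 3 statements merged into one kernel-verified Lean document; each statement's English description precedes it below -/
import Mathlib

section
/- For every n ∈ ℕ with n ≥ 1 and every ω ∈ ℝ \ {0}, one has the absolutely convergent power-series expansion B̂_n(ω) = ∑_{m=0}^{∞} (-i)^m · ( S₂(m+n, n) / binom(m+n, n) ) · ω^m/m!, i.e. the m-th Maclaurin coefficient of the entire extension of ω ↦ ((1 - e^{-iω})/(iω))^n equals (-i)^m S₂(m+n,n)/(binom(m+n,n)·m!). -/
/-!
Expanding `(eᶻ - 1)ⁿ = ∑ₖ (-1)ⁿ⁻ᵏ C(n,k) eᵏᶻ` binomially and each `eᵏᶻ` as its exponential series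
shows that the `m`-th Taylor coefficient of `(eᶻ - 1)ⁿ` is `n! S₂(m,n) / m!`. These vanish for
`m < n`, since `n! S₂(m,n)` is the `n`-th forward difference of `x ↦ xᵐ` at `0`; so dividing by
`zⁿ` shifts the series by `n`, and `(m+n)! = C(m+n,n) m! n!` turns the coefficients into the
stated ones. Taking `z = -iω` gives `B̂ₙ(ω)`.
-/

/-- The Fourier transform of the cardinal B-spline of order `n`,
`B̂ₙ(ω) = ((1 - e^{-iω})/(iω))^n`. -/
noncomputable def Bhat (n : ℕ) (ω : ℝ) : ℂ :=
  ((1 - Complex.exp (-(Complex.I * ω))) / (Complex.I * ω)) ^ n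

/-- The Stirling numbers of the second kind,
`S₂(m,n) = (1/n!) ∑_{j=0}^{n} (-1)^j C(n,j) (n-j)^m`. -/
noncomputable def S2 (m n : ℕ) : ℝ :=
  (1 / (n.factorial : ℝ)) *
    ∑ j ∈ Finset.range (n + 1), (-1 : ℝ) ^ j * (n.choose j : ℝ) * ((n - j : ℕ) : ℝ) ^ m

open Finset Nat Complex
open scoped fwdDiff

theorem factorial_mul_S2_eq_sum (m n : ℕ) :
    (n ! : ℝ) * S2 m n = ∑ k ∈ range (n + 1), (-1 : ℝ) ^ (n - k) * n.choose k * (k : ℝ) ^ m := by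
  rw [S2, ← mul_assoc, mul_one_div_cancel (by positivity), one_mul, ← sum_range_reflect]
  refine sum_congr rfl fun j hj => ?_
  have hjn : j ≤ n := Nat.lt_succ_iff.mp (mem_range.mp hj)
  rw [add_tsub_cancel_right, Nat.sub_sub_self hjn, Nat.choose_symm hjn]

theorem factorial_mul_S2_eq_fwdDiff_iter (m n : ℕ) :
    (n ! : ℝ) * S2 m n = (Δ_[1])^[n] (fun x : ℝ => x ^ m) 0 := by
  simp [factorial_mul_S2_eq_sum, fwdDiff_iter_eq_sum_shift]

theorem S2_eq_zero_of_lt {m n : ℕ} (h : m < n) : S2 m n = 0 := by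
  have h₀ := factorial_mul_S2_eq_fwdDiff_iter m n
  rw [fwdDiff_iter_pow_eq_zero_of_lt h, Pi.zero_apply] at h₀
  exact (mul_eq_zero.mp h₀).resolve_left (by positivity)

theorem factorial_mul_S2_mul_pow_div_factorial (m n : ℕ) (z : ℂ) :
    ((n ! * S2 m n : ℝ) : ℂ) * z ^ m / m ! =
      ∑ k ∈ range (n + 1), (-1) ^ (n - k) * n.choose k * ((k * z) ^ m / m !) := by
  rw [factorial_mul_S2_eq_sum]
  push_cast
  rw [sum_mul, sum_div]
  exact sum_congr rfl fun k _ => by ring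

theorem hasSum_exp_sub_one_pow (n : ℕ) (z : ℂ) :
    HasSum (fun m => ((n ! * S2 m n : ℝ) : ℂ) * z ^ m / m !) ((exp z - 1) ^ n) := by
  have hbinom : (exp z - 1) ^ n =
      ∑ k ∈ range (n + 1), (-1) ^ (n - k) * n.choose k * exp (k * z) := by
    rw [sub_eq_add_neg, add_pow]
    exact sum_congr rfl fun k _ => by rw [← exp_nat_mul]; ring
  simp_rw [factorial_mul_S2_mul_pow_div_factorial, hbinom, exp_eq_exp_ℂ]
  exact hasSum_sum fun (k : ℕ) _ =>
    (NormedSpace.expSeries_div_hasSum_exp ((k : ℂ) * z)).mul_left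
      ((-1) ^ (n - k) * (n.choose k : ℂ))

theorem summable_norm_factorial_mul_S2_mul_pow_div_factorial (n : ℕ) (z : ℂ) :
    Summable fun m => ‖((n ! * S2 m n : ℝ) : ℂ) * z ^ m / (m ! : ℂ)‖ := by
  have hbound : Summable fun m =>
      ∑ k ∈ range (n + 1), (n.choose k : ℝ) * ‖((k : ℂ) * z) ^ m / (m ! : ℂ)‖ :=
    summable_sum fun k _ => (NormedSpace.norm_expSeries_div_summable _).mul_left _
  refine Summable.of_nonneg_of_le (fun _ => norm_nonneg _) (fun m => ?_) hbound
  rw [factorial_mul_S2_mul_pow_div_factorial]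
  refine (norm_sum_le _ _).trans (sum_le_sum fun k _ => ?_)
  simp

theorem S2_div_choose_mul_pow_div_factorial (m n : ℕ) {z : ℂ} (hz : z ≠ 0) :
    ((S2 (m + n) n / (m + n).choose n : ℝ) : ℂ) * z ^ m / m ! =
      ((n ! * S2 (m + n) n : ℝ) : ℂ) * z ^ (m + n) / (m + n)! / z ^ n := by
  rw [← Nat.add_choose_mul_factorial_mul_factorial m n]
  have : ((m + n).choose n : ℂ) ≠ 0 := by exact_mod_cast (Nat.choose_pos (by omega)).ne'
  have : (n ! : ℂ) ≠ 0 := by exact_mod_cast n.factorial_ne_zero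
  push_cast
  field_simp
  ring

theorem hasSum_exp_sub_one_div_pow (n : ℕ) {z : ℂ} (hz : z ≠ 0) :
    HasSum (fun m => ((S2 (m + n) n / (m + n).choose n : ℝ) : ℂ) * z ^ m / m !)
      (((exp z - 1) / z) ^ n) := by
  simp_rw [S2_div_choose_mul_pow_div_factorial _ _ hz, div_pow]
  refine HasSum.div_const ?_ _
  have h := (hasSum_nat_add_iff' n).mpr (hasSum_exp_sub_one_pow n z)
  rwa [sum_eq_zero fun m hm => by rw [S2_eq_zero_of_lt (mem_range.mp hm)]; simp, sub_zero] at h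

theorem summable_norm_S2_div_choose_mul_pow_div_factorial (n : ℕ) {z : ℂ} (hz : z ≠ 0) :
    Summable fun m => ‖((S2 (m + n) n / (m + n).choose n : ℝ) : ℂ) * z ^ m / (m ! : ℂ)‖ := by
  simp_rw [S2_div_choose_mul_pow_div_factorial _ _ hz, norm_div _ (z ^ n)]
  exact ((summable_nat_add_iff n).mpr
    (summable_norm_factorial_mul_S2_mul_pow_div_factorial n z)).div_const _

theorem stmt2_general (n : ℕ) (ω : ℝ) (hω : ω ≠ 0) :
    Summable (fun m : ℕ => ‖(-Complex.I) ^ m *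
        ((S2 (m + n) n / ((m + n).choose n : ℝ) : ℝ) : ℂ) * (ω : ℂ) ^ m /
        (m.factorial : ℂ)‖) ∧
    Bhat n ω = ∑' m : ℕ, (-Complex.I) ^ m *
        ((S2 (m + n) n / ((m + n).choose n : ℝ) : ℝ) : ℂ) * (ω : ℂ) ^ m /
        (m.factorial : ℂ) := by
  set z : ℂ := -I * ω with hz_def
  have hz : z ≠ 0 := by simp [z, hω]
  have hBhat : Bhat n ω = ((exp z - 1) / z) ^ n := by
    rw [Bhat, ← neg_div_neg_eq, neg_sub, hz_def, neg_mul]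
  have hterm (c : ℂ) (m : ℕ) : (-I) ^ m * c * (ω : ℂ) ^ m / m ! = c * z ^ m / m ! := by
    rw [hz_def, mul_pow]; ring
  simp_rw [hterm, hBhat]
  exact ⟨summable_norm_S2_div_choose_mul_pow_div_factorial n hz,
    (hasSum_exp_sub_one_div_pow n hz).tsum_eq.symm⟩

/-- For `n ≥ 1` and real `ω ≠ 0`, one has the absolutely convergent expansion
`B̂ₙ(ω) = ∑ₘ (-i)^m (S₂(m+n,n)/C(m+n,n)) ω^m/m!`. -/
theorem stmt2 (n : ℕ) (hn : 1 ≤ n) (ω : ℝ) (hω : ω ≠ 0) :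
    Summable (fun m : ℕ => ‖(-Complex.I) ^ m *
        ((S2 (m + n) n / ((m + n).choose n : ℝ) : ℝ) : ℂ) * (ω : ℂ) ^ m /
        (m.factorial : ℂ)‖) ∧
    Bhat n ω = ∑' m : ℕ, (-Complex.I) ^ m *
        ((S2 (m + n) n / ((m + n).choose n : ℝ) : ℝ) : ℂ) * (ω : ℂ) ^ m /
        (m.factorial : ℂ) :=
  stmt2_general n ω hω
end

section
/- Let α > 1 be real and let f : ℝ → ℂ be a Schwartz function. Then for every x ∈ ℝ the series ∇^α f(x) := ∑_{k=0}^{∞} (-1)^k binom(α,k) f(x-k) converges absolutely, the function ∇^α f is integrable on ℝ, and for every ω ∈ ℝ its Fourier transform satisfies ∫_ℝ (∇^α f)(x) e^{-iωx} dx = ( ∑_{k=0}^{∞} (-1)^k binom(α,k) e^{-ikω} ) · ∫_ℝ f(x) e^{-iωx} dx. -/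
/-- The generalized binomial coefficient
`binom(α,k) = α(α-1)⋯(α-k+1)/k!` (with `binom(α,0)=1`). -/
noncomputable def gbinom (α : ℝ) (k : ℕ) : ℝ :=
  (∏ i ∈ Finset.range k, (α - i)) / (k.factorial : ℝ)

/-!
The coefficients `(-1)^k binom(α,k)` are absolutely summable for `α > 0`: once `k ≥ α` the ratio
recursion `(k+1)|binom(α,k+1)| = (k-α)|binom(α,k)|` makes `α |binom(α,k)|` a telescoping
difference of the nonnegative sequence `k |binom(α,k)|`. A series of translates `∑ c_k f(· - k)`
with absolutely summable coefficients of an integrable `f` is integrable, and its integral may be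
taken term by term. Since `e^{-iωx} = e^{-ikω} e^{-iω(x-k)}`, the same applies to
`(∑ c_k f(· - k)) e^{-iω·}`, a series of translates of `f e^{-iω·}`.
-/

open MeasureTheory

lemma gbinom_succ (α : ℝ) (k : ℕ) :
    gbinom α (k + 1) = gbinom α k * (α - k) / (k + 1) := by
  unfold gbinom
  rw [Finset.prod_range_succ, Nat.factorial_succ]
  push_cast
  rw [div_mul_eq_mul_div, div_div, mul_comm ((k : ℝ) + 1)]

lemma mul_abs_gbinom_eq_sub {α : ℝ} {k : ℕ} (hk : α ≤ k) :
    α * |gbinom α k| = k * |gbinom α k| - (k + 1) * |gbinom α (k + 1)| := by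
  rw [gbinom_succ, abs_div, abs_mul, abs_of_nonpos (sub_nonpos.2 hk),
    abs_of_pos (by positivity : (0 : ℝ) < k + 1)]
  field_simp
  ring

theorem summable_abs_gbinom {α : ℝ} (hα : 0 < α) : Summable fun k ↦ |gbinom α k| := by
  set N := ⌈α⌉₊
  set u : ℕ → ℝ := fun j ↦ ((N + j : ℕ) : ℝ) * |gbinom α (N + j)|
  have htele : ∀ j, α * |gbinom α (N + j)| = u j - u (j + 1) := fun j ↦ by
    have hj : α ≤ (N + j : ℕ) := (Nat.le_ceil α).trans (by exact_mod_cast Nat.le_add_right N j)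
    simp only [u, mul_abs_gbinom_eq_sub hj, ← add_assoc]
    push_cast
    ring
  have hbound : ∀ M, ∑ j ∈ Finset.range M, |gbinom α (N + j)| ≤ u 0 / α := fun M ↦ by
    rw [le_div_iff₀ hα, Finset.sum_mul]
    simp only [mul_comm _ α, htele, Finset.sum_range_sub']
    have : 0 ≤ u M := by positivity
    linarith
  refine (summable_nat_add_iff N).1 ?_
  simpa only [add_comm _ N] using summable_of_sum_range_le (fun _ ↦ abs_nonneg _) hbound

theorem integrable_tsum_of_summable_integral_norm {ι X E : Type*} [Countable ι] [MeasurableSpace X]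
    {ν : Measure X} [NormedAddCommGroup E] [CompleteSpace E] {F : ι → X → E}
    (hF_int : ∀ i, Integrable (F i) ν) (hF_sum : Summable fun i ↦ ∫ x, ‖F i x‖ ∂ν) :
    Integrable (fun x ↦ ∑' i, F i x) ν := by
  set F₁ : ι → X →₁[ν] E := fun i ↦ (hF_int i).toL1 (F i)
  have hnorm : ∀ i, ‖F₁ i‖ = ∫ x, ‖F i x‖ ∂ν := fun i ↦ by
    rw [L1.norm_eq_integral_norm]
    exact integral_congr_ae ((hF_int i).coeFn_toL1.fun_comp norm)
  have hsum : ∑' i, ‖F₁ i‖ₑ ≠ ⊤ :=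
    tsum_enorm_ne_top_iff_summable_norm.2 (by simpa only [hnorm] using hF_sum)
  refine (L1.integrable_coeFn (∑' i, F₁ i)).congr ?_
  filter_upwards [Lp.coeFn_tsum hsum, ae_all_iff.2 fun i ↦ (hF_int i).coeFn_toL1] with x hx hF
  rw [hx]
  exact tsum_congr hF

section Translates

variable {G 𝕜 ι : Type*} [AddGroup G] [RCLike 𝕜] {c : ι → 𝕜} {a : ι → G} {g : G → 𝕜}

theorem summable_norm_mul_comp_sub_of_bounded {C : ℝ} (hg : ∀ y, ‖g y‖ ≤ C)
    (hc : Summable (‖c ·‖)) (x : G) : Summable fun i ↦ ‖c i * g (x - a i)‖ :=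
  (hc.mul_right C).of_nonneg_of_le (fun _ ↦ norm_nonneg _) fun i ↦ by
    rw [norm_mul]
    exact mul_le_mul_of_nonneg_left (hg _) (norm_nonneg _)

variable [MeasurableSpace G] [MeasurableAdd G] {μ : Measure G} [μ.IsAddRightInvariant]

theorem integral_norm_mul_comp_sub (c : 𝕜) (t : G) :
    ∫ x, ‖c * g (x - t)‖ ∂μ = ‖c‖ * ∫ x, ‖g x‖ ∂μ := by
  simp only [norm_mul]
  rw [integral_const_mul, integral_sub_right_eq_self (fun y ↦ ‖g y‖) t]

theorem summable_integral_norm_mul_comp_sub (hc : Summable (‖c ·‖)) :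
    Summable fun i ↦ ∫ x, ‖c i * g (x - a i)‖ ∂μ := by
  simpa only [integral_norm_mul_comp_sub] using hc.mul_right _

variable [Countable ι]

theorem integrable_tsum_mul_comp_sub (hg : Integrable g μ) (hc : Summable (‖c ·‖)) :
    Integrable (fun x ↦ ∑' i, c i * g (x - a i)) μ :=
  integrable_tsum_of_summable_integral_norm (fun i ↦ (hg.comp_sub_right (a i)).const_mul (c i))
    (summable_integral_norm_mul_comp_sub hc)

theorem integral_tsum_mul_comp_sub (hg : Integrable g μ) (hc : Summable (‖c ·‖)) :
    ∫ x, ∑' i, c i * g (x - a i) ∂μ = (∑' i, c i) * ∫ x, g x ∂μ := by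
  rw [← integral_tsum_of_summable_integral_norm
    (fun i ↦ (hg.comp_sub_right (a i)).const_mul (c i)) (summable_integral_norm_mul_comp_sub hc)]
  simp only [integral_const_mul, integral_sub_right_eq_self g, tsum_mul_right]

end Translates

theorem integral_tsum_mul_comp_sub_mul_exp {ι : Type*} [Countable ι] {c : ι → ℂ} {a : ι → ℝ}
    {g : ℝ → ℂ} (hg : Integrable g) (hc : Summable (‖c ·‖)) (ω : ℝ) :
    ∫ x : ℝ, (∑' i, c i * g (x - a i)) * Complex.exp (-(Complex.I * ω * x)) =
      (∑' i, c i * Complex.exp (-(Complex.I * a i * ω))) *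
        ∫ x : ℝ, g x * Complex.exp (-(Complex.I * ω * x)) := by
  set e : ℝ → ℂ := fun x ↦ Complex.exp (-(Complex.I * ω * x))
  have he : ∀ x t : ℝ, e x = Complex.exp (-(Complex.I * t * ω)) * e (x - t) := fun x t ↦ by
    simp only [e, ← Complex.exp_add]
    congr 1
    push_cast
    ring
  have hge : Integrable fun x ↦ g x * e x :=
    hg.mul_bdd (c := 1) (by fun_prop) (.of_forall fun x ↦ by simp [e, Complex.norm_exp])
  have hce : Summable fun i ↦ ‖c i * Complex.exp (-(Complex.I * a i * ω))‖ := by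
    simpa [Complex.norm_exp] using hc
  rw [← integral_tsum_mul_comp_sub (a := a) hge hce]
  congr 1 with x
  rw [← tsum_mul_right]
  congr 1 with i
  rw [show Complex.exp (-(Complex.I * ω * x)) = e x from rfl, he x (a i)]
  ring

/-- For real `α > 1` and a Schwartz function `f`, the fractional forward difference
`∇^α f(x) = ∑ₖ (-1)^k binom(α,k) f(x-k)` converges absolutely at every `x`, defines an
integrable function, and its Fourier transform satisfies
`∫ (∇^α f)(x) e^{-iωx} dx = (∑ₖ (-1)^k binom(α,k) e^{-ikω}) ∫ f(x) e^{-iωx} dx`. -/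
theorem stmt6 (α : ℝ) (hα : 1 < α) (f : SchwartzMap ℝ ℂ) :
    (∀ x : ℝ, Summable (fun k : ℕ =>
      ‖(-1 : ℂ) ^ k * (gbinom α k : ℂ) * f (x - k)‖)) ∧
    MeasureTheory.Integrable
      (fun x : ℝ => ∑' k : ℕ, (-1 : ℂ) ^ k * (gbinom α k : ℂ) * f (x - k)) ∧
    ∀ ω : ℝ,
      ∫ x : ℝ, (∑' k : ℕ, (-1 : ℂ) ^ k * (gbinom α k : ℂ) * f (x - k)) *
          Complex.exp (-(Complex.I * ω * x)) =
        (∑' k : ℕ, (-1 : ℂ) ^ k * (gbinom α k : ℂ) *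
            Complex.exp (-(Complex.I * k * ω))) *
          ∫ x : ℝ, f x * Complex.exp (-(Complex.I * ω * x)) := by
  have hc : Summable fun k : ℕ ↦ ‖(-1 : ℂ) ^ k * (gbinom α k : ℂ)‖ := by
    simpa using summable_abs_gbinom (by linarith)
  refine ⟨summable_norm_mul_comp_sub_of_bounded (SchwartzMap.norm_le_seminorm ℝ f) hc,
    integrable_tsum_mul_comp_sub f.integrable hc, fun ω ↦ ?_⟩
  simpa using integral_tsum_mul_comp_sub_mul_exp (a := fun k : ℕ ↦ (k : ℝ)) f.integrable hc ω
end

section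
/- Let α > 0 be real, x ∈ ℝ, and t ∈ ℝ. Then the ordinary generating function of the fractional spline polynomials satisfies ∑_{n=0}^{∞} S_n^{(α)}(x) tⁿ = ∑_{k=0}^{∞} (-1)^k binom(α+1,k) (x-k)₊^{α} · E_{1,α+1}( (x-k)₊ · t ), where both series converge (the n-series converges absolutely for every t, and the k-series has only finitely many nonzero terms, namely those with k < x). -/
/-!
Since `(x-k)₊^{α+n} = (x-k)₊^α ((x-k)₊)ⁿ`, the term `Sₙ^{(α)}(x) tⁿ` is a finite sum over `k < x`
of `(-1)^k binom(α+1,k) (x-k)₊^α · ((x-k)₊ t)ⁿ / Γ(n+α+1)`. Each of these `n`-series is a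
Mittag–Leffler series, absolutely convergent because `Γ(α+1) n! ≤ Γ(n+α+1)`, so the finite sum
over `k` may be exchanged with the sum over `n`.
-/

open Finset
open scoped Nat

/-- The truncated power `x₊^β = x^β` if `x > 0` and `0` otherwise. -/
noncomputable def tpow (x β : ℝ) : ℝ := if 0 < x then x ^ β else 0

/-- The fractional spline polynomials
`Sₙ^{(α)}(x) = (1/Γ(α+n+1)) ∑ₖ (-1)^k binom(α+1,k) (x-k)₊^{α+n}`
(only finitely many terms are nonzero). -/
noncomputable def fracSplinePoly (α : ℝ) (n : ℕ) (x : ℝ) : ℝ :=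
  (1 / Real.Gamma (α + n + 1)) *
    ∑' k : ℕ, (-1 : ℝ) ^ k * gbinom (α + 1) k * tpow (x - k) (α + n)

/-- The Mittag–Leffler function `E_{1,β}(z) = ∑ₙ zⁿ/Γ(n+β)`. -/
noncomputable def mittagLeffler (β z : ℝ) : ℝ :=
  ∑' n : ℕ, z ^ n / Real.Gamma (n + β)

theorem Real.Gamma_mul_factorial_le_Gamma_natCast_add {β : ℝ} (hβ : 1 ≤ β) (n : ℕ) :
    Real.Gamma β * n ! ≤ Real.Gamma (n + β) := by
  induction n with
  | zero => simp
  | succ n ih =>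
    rw [Nat.factorial_succ, Nat.cast_mul, Nat.cast_succ, add_right_comm,
      Real.Gamma_add_one (by positivity)]
    calc Real.Gamma β * ((n + 1) * n !) = (n + 1) * (Real.Gamma β * n !) := by ring
      _ ≤ (n + β) * Real.Gamma (n + β) := by gcongr

theorem summable_pow_div_Gamma_natCast_add {β : ℝ} (hβ : 1 ≤ β) (z : ℝ) :
    Summable fun n : ℕ => z ^ n / Real.Gamma (n + β) := by
  refine .of_norm_bounded ((Real.summable_pow_div_factorial |z|).div_const (Real.Gamma β))
    fun n => ?_
  rw [Real.norm_eq_abs, abs_div, abs_pow, abs_of_pos (Real.Gamma_pos_of_pos (by positivity)),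
    div_div, mul_comm]
  gcongr
  exact Real.Gamma_mul_factorial_le_Gamma_natCast_add hβ n

theorem tpow_of_nonpos {x : ℝ} (hx : x ≤ 0) (β : ℝ) : tpow x β = 0 :=
  if_neg hx.not_gt

theorem tpow_add_natCast (x β : ℝ) (n : ℕ) : tpow x (β + n) = tpow x β * max x 0 ^ n := by
  rcases le_or_gt x 0 with hx | hx
  · simp [tpow_of_nonpos hx]
  · simp only [tpow, if_pos hx, max_eq_left hx.le, Real.rpow_add hx, Real.rpow_natCast]

theorem tsum_eq_sum_range_ceil {M : Type*} [AddCommMonoid M] [TopologicalSpace M]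
    {f : ℕ → M} {x : ℝ} (hf : ∀ k : ℕ, x ≤ k → f k = 0) :
    ∑' k, f k = ∑ k ∈ range ⌈x⌉₊, f k :=
  tsum_eq_sum fun k hk => hf k (by simpa [Nat.lt_ceil] using hk)

theorem fracSplinePoly_mul_pow (α x t : ℝ) (n : ℕ) :
    fracSplinePoly α n x * t ^ n = ∑ k ∈ range ⌈x⌉₊,
      (-1 : ℝ) ^ k * gbinom (α + 1) k * tpow (x - k) α *
        ((max (x - k) 0 * t) ^ n / Real.Gamma (n + (α + 1))) := by
  rw [fracSplinePoly, tsum_eq_sum_range_ceil fun k hk => by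
      rw [tpow_of_nonpos (sub_nonpos.2 hk), mul_zero],
    mul_sum, sum_mul]
  refine sum_congr rfl fun k _ => ?_
  rw [tpow_add_natCast, mul_pow, show (n : ℝ) + (α + 1) = α + n + 1 by ring]
  ring

/-- For real `α > 0`, `x, t ∈ ℝ`, the ordinary generating function of the fractional
spline polynomials satisfies
`∑ₙ Sₙ^{(α)}(x) tⁿ = ∑ₖ (-1)^k binom(α+1,k) (x-k)₊^α E_{1,α+1}((x-k)₊ t)`,
where the `n`-series converges absolutely and the `k`-series has only finitely many
nonzero terms, namely (at most) those with `k < x`. -/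
theorem stmt11 (α : ℝ) (hα : 0 < α) (x t : ℝ) :
    Summable (fun n : ℕ => |fracSplinePoly α n x * t ^ n|) ∧
    {k : ℕ | (-1 : ℝ) ^ k * gbinom (α + 1) k * tpow (x - k) α *
        mittagLeffler (α + 1) (max (x - k) 0 * t) ≠ 0} ⊆ {k : ℕ | (k : ℝ) < x} ∧
    {k : ℕ | (-1 : ℝ) ^ k * gbinom (α + 1) k * tpow (x - k) α *
        mittagLeffler (α + 1) (max (x - k) 0 * t) ≠ 0}.Finite ∧
    ∑' n : ℕ, fracSplinePoly α n x * t ^ n =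
      ∑' k : ℕ, (-1 : ℝ) ^ k * gbinom (α + 1) k * tpow (x - k) α *
        mittagLeffler (α + 1) (max (x - k) 0 * t) := by
  have hG_zero : ∀ k : ℕ, x ≤ k → (-1 : ℝ) ^ k * gbinom (α + 1) k * tpow (x - k) α *
      mittagLeffler (α + 1) (max (x - k) 0 * t) = 0 := fun k hk => by
    rw [tpow_of_nonpos (sub_nonpos.2 hk), mul_zero, zero_mul]
  have hsummable : ∀ k : ℕ, Summable fun n : ℕ => (-1 : ℝ) ^ k * gbinom (α + 1) k *
      tpow (x - k) α * ((max (x - k) 0 * t) ^ n / Real.Gamma (n + (α + 1))) := fun k =>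
    (summable_pow_div_Gamma_natCast_add (by linarith) _).mul_left _
  have hsupport : {k : ℕ | (-1 : ℝ) ^ k * gbinom (α + 1) k * tpow (x - k) α *
      mittagLeffler (α + 1) (max (x - k) 0 * t) ≠ 0} ⊆ {k : ℕ | (k : ℝ) < x} :=
    fun k hk => not_le.1 fun h => hk (hG_zero k h)
  refine ⟨?_, hsupport, (Set.finite_Iio ⌈x⌉₊).subset fun k hk => Nat.lt_ceil.2 (hsupport hk), ?_⟩
  · simp_rw [fracSplinePoly_mul_pow]
    exact summable_abs_iff.2 (summable_sum fun k _ => hsummable k)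
  · simp_rw [fracSplinePoly_mul_pow]
    rw [Summable.tsum_finsetSum fun k _ => hsummable k, tsum_eq_sum_range_ceil hG_zero]
    refine sum_congr rfl fun k _ => ?_
    rw [tsum_mul_left, mittagLeffler]
end
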